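/- arXiv:1811.06253 — 5 statements merged into one kernel-verified Lean document; each statement's English description precedes it below -/
import Mathlib

section
/- Siegel's lemma (used as Lemma in §3.2): Let M < N be positive integers and let A = (a_{ij}) be an M × N matrix of rank M with integer entries. Then the ℚ-vector space of solutions x ∈ ℚ^N of the homogeneous linear system A x = 0 admits a basis consisting of N − M vectors x^1, …, x^{N−M} all of whose coordinates x_j^l are integers and satisfy |x_j^l| ≤ √(|det(A Aᵀ)|) for all j = 1, …, N and l = 1, …, N − M. -/
/-!
Choose `M` columns `g` of `A` whose minor `d = det (A.submatrix id g)` is nonzero. For each of the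
remaining `N - M` columns `c`, Cramer's rule expresses `d • (column c)` through the columns `g`;
the resulting relation is a kernel vector whose coordinates are `d` (at `c`), minus the minor with
column `g k` replaced by `c` (at `g k`), and `0` elsewhere: all of them maximal minors of `A`, up to
sign. On the coordinates outside `g` these vectors form `d • 1`, so they are independent, hence a
basis of the `(N - M)`-dimensional kernel. Finally, by the Cauchy–Binet formula `det (A * Aᵀ)` is
the sum of the squares of the maximal minors of `A`, which bounds each of them.
-/

open Matrix Finset Equiv Function Module

namespace Tuple

variable {α : Type*} [LinearOrder α] {m : ℕ}

theorem eq_sort_of_strictMono {f : Fin m → α} {σ : Perm (Fin m)} (h : StrictMono (f ∘ σ)) :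
    σ = sort f :=
  eq_sort_iff.2 ⟨h.monotone, fun _ _ hij heq => absurd heq (h hij).ne⟩

theorem strictMono_comp_sort {f : Fin m → α} (hf : Injective f) : StrictMono (f ∘ sort f) :=
  (monotone_sort f).strictMono_of_injective (hf.comp (sort f).injective)

variable (α m) in
def injectiveEquivStrictMonoProdPerm :
    {p : Fin m → α // Injective p} ≃ {g : Fin m → α // StrictMono g} × Perm (Fin m) where
  toFun p := (⟨p.1 ∘ sort p.1, strictMono_comp_sort p.2⟩, (sort p.1)⁻¹)
  invFun gτ := ⟨gτ.1.1 ∘ gτ.2, gτ.1.2.injective.comp gτ.2.injective⟩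
  left_inv p := by ext; simp
  right_inv := by
    rintro ⟨⟨g, hg⟩, τ⟩
    have hsort : sort (g ∘ τ) = τ⁻¹ :=
      (eq_sort_of_strictMono (by simpa [comp_assoc] using hg)).symm
    ext <;> simp [hsort]

end Tuple

theorem Fintype.card_subtype_notMem_range {m n : Type*} [Fintype m] [Fintype n] [DecidableEq n]
    {g : m → n} (hg : Injective g) :
    Fintype.card {c // c ∉ Set.range g} = Fintype.card n - Fintype.card m := by
  rw [Fintype.card_subtype_compl, ← Set.card_range_of_injective hg]

theorem Int.abs_cast_le_sqrt_abs_of_sq_le {z D : ℤ} (h : z ^ 2 ≤ D) :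
    |(z : ℝ)| ≤ Real.sqrt |(D : ℝ)| :=
  Real.abs_le_sqrt (by exact_mod_cast h.trans (le_abs_self D))

namespace Matrix

section Minors

variable {R m n : Type*} [CommRing R] [Fintype m] [DecidableEq m]

theorem det_mul_eq_sum_prod_mul_det_submatrix [Fintype n] (A : Matrix m n R) (B : Matrix n m R) :
    det (A * B) = ∑ p : m → n, (∏ i, B (p i) i) * det (A.submatrix id p) := by
  calc det (A * B)
      = ∑ σ : Perm m, ∑ p : m → n, (Perm.sign σ : R) * ∏ i, A (σ i) (p i) * B (p i) i := by
        simp only [det_apply', mul_apply, prod_univ_sum, Fintype.piFinset_univ, mul_sum]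
    _ = ∑ p : m → n, det (of fun i j => B (p j) j * A.submatrix id p i j) := by
        rw [Finset.sum_comm]
        simp only [det_apply', of_apply, submatrix_apply, id, mul_comm (B _ _)]
    _ = ∑ p : m → n, (∏ i, B (p i) i) * det (A.submatrix id p) := by
        simp only [det_mul_row]

theorem det_submatrix_comp_perm (A : Matrix m n R) (g : m → n) (τ : Perm m) :
    det (A.submatrix id (g ∘ τ)) = Perm.sign τ * det (A.submatrix id g) :=
  det_permute' τ (A.submatrix id g)

theorem det_submatrix_eq_zero_of_not_injective (A : Matrix m n R) {g : m → n}
    (hg : ¬ Injective g) : det (A.submatrix id g) = 0 := by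
  obtain ⟨i, j, hgij, hij⟩ := not_injective_iff.1 hg
  exact det_zero_of_column_eq hij fun k => by simp [hgij]

theorem injective_of_det_submatrix_ne_zero {A : Matrix m n R} {g : m → n}
    (h : det (A.submatrix id g) ≠ 0) : Injective g :=
  not_not.1 (mt A.det_submatrix_eq_zero_of_not_injective h)

theorem exists_det_submatrix_ne_zero_of_rank_eq {K : Type*} [Field K] [Fintype n]
    (A : Matrix m n K) (hA : A.rank = Fintype.card m) :
    ∃ g : m → n, det (A.submatrix id g) ≠ 0 := by
  obtain ⟨κ, a, -, hspan, hli⟩ := exists_linearIndependent' K A.col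
  have := hli.finite
  have := Fintype.ofFinite κ
  have hcard : Fintype.card m = Fintype.card κ := by
    rw [← hA, rank_eq_finrank_span_cols, ← hspan, finrank_span_eq_card hli]
  let e := Fintype.equivOfCardEq hcard
  refine ⟨a ∘ e, fun hdet => ?_⟩
  have hcols : LinearIndependent K (A.submatrix id (a ∘ e)).col := hli.comp e e.injective
  exact ((isUnit_iff_isUnit_det _).1 (linearIndependent_cols_iff_isUnit.1 hcols)).ne_zero hdet

end Minors

section CauchyBinet

variable {R : Type*} [CommRing R] {m n : ℕ}

/-- The Cauchy–Binet formula. -/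
theorem det_mul_eq_sum_strictMono (A : Matrix (Fin m) (Fin n) R) (B : Matrix (Fin n) (Fin m) R) :
    det (A * B) = ∑ g : {g : Fin m → Fin n // StrictMono g},
      det (A.submatrix id g.1) * det (B.submatrix g.1 id) := by
  let term (p : Fin m → Fin n) : R := (∏ i, B (p i) i) * det (A.submatrix id p)
  rw [det_mul_eq_sum_prod_mul_det_submatrix, ← Fintype.sum_subtype_add_sum_subtype Injective,
    Fintype.sum_eq_zero (fun p : {p // ¬ Injective p} => term p.1)
      fun p => by simp [term, det_submatrix_eq_zero_of_not_injective A p.2], add_zero,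
    ← (Tuple.injectiveEquivStrictMonoProdPerm (Fin n) m).symm.sum_comp, Fintype.sum_prod_type]
  refine Fintype.sum_congr _ _ fun g => ?_
  simp only [Tuple.injectiveEquivStrictMonoProdPerm, Equiv.coe_fn_symm_mk,
    det_submatrix_comp_perm, det_apply' (B.submatrix g.1 id), mul_sum]
  refine Fintype.sum_congr _ _ fun τ => ?_
  simp only [submatrix_apply, id, comp_def]
  ring

theorem det_mul_transpose_eq_sum_sq (A : Matrix (Fin m) (Fin n) R) :
    det (A * Aᵀ) = ∑ g : {g : Fin m → Fin n // StrictMono g}, det (A.submatrix id g.1) ^ 2 := by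
  simp only [det_mul_eq_sum_strictMono, ← transpose_submatrix, det_transpose, sq]

theorem sq_det_submatrix_le_det_mul_transpose {S : Type*} [CommRing S] [LinearOrder S]
    [IsStrictOrderedRing S] (A : Matrix (Fin m) (Fin n) S) (g : Fin m → Fin n) :
    det (A.submatrix id g) ^ 2 ≤ det (A * Aᵀ) := by
  rw [det_mul_transpose_eq_sum_sq]
  by_cases hg : Injective g
  · obtain ⟨⟨h, τ⟩, hfactor⟩ : ∃ hτ : {h : Fin m → Fin n // StrictMono h} × Perm (Fin m),
        g = hτ.1.1 ∘ hτ.2 :=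
      ⟨(⟨g ∘ Tuple.sort g, Tuple.strictMono_comp_sort hg⟩, (Tuple.sort g)⁻¹), by ext; simp⟩
    have hsign : ((Perm.sign τ : ℤ) : S) ^ 2 = 1 := by
      rw [← Int.cast_pow, ← Units.val_pow_eq_pow_val, Int.units_sq, Units.val_one, Int.cast_one]
    calc det (A.submatrix id g) ^ 2 = det (A.submatrix id h.1) ^ 2 := by
          rw [hfactor, det_submatrix_comp_perm, mul_pow, hsign, one_mul]
      _ ≤ _ := single_le_sum (f := fun h : {h : Fin m → Fin n // StrictMono h} =>
          det (A.submatrix id h.1) ^ 2) (fun _ _ => sq_nonneg _) (mem_univ h)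
  · rw [det_submatrix_eq_zero_of_not_injective A hg, sq, mul_zero]
    exact sum_nonneg fun _ _ => sq_nonneg _

end CauchyBinet

theorem mulVec_extend_zero {R m n k : Type*} [NonUnitalNonAssocSemiring R] [Fintype n]
    [Fintype k] (A : Matrix m n R) {g : k → n} (hg : Injective g) (y : k → R) :
    A *ᵥ extend g y 0 = A.submatrix id g *ᵥ y := by
  ext i
  simp only [mulVec, dotProduct, submatrix_apply, id]
  exact (Fintype.sum_of_injective g hg _ _ (fun j hj => by
    rw [extend_apply' _ _ _ hj, Pi.zero_apply, mul_zero]) fun k => by rw [hg.extend_apply]).symm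

theorem submatrix_update_eq_updateCol {R m n : Type*} [DecidableEq m] (A : Matrix m n R)
    (g : m → n) (k : m) (c : n) :
    A.submatrix id (update g k c) = (A.submatrix id g).updateCol k (A.col c) := by
  ext i j
  by_cases hj : j = k <;> simp [hj]

section KernelVec

variable {R m n : Type*} [CommRing R] [Fintype m] [DecidableEq m] [DecidableEq n]

noncomputable def cramerKernelVec (A : Matrix m n R) (g : m → n) (c : n) : n → R :=
  det (A.submatrix id g) • Pi.single c 1 - extend g (cramer (A.submatrix id g) (A.col c)) 0

variable {A : Matrix m n R} {g : m → n}

theorem mulVec_cramerKernelVec [Fintype n] (hg : Injective g) (c : n) :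
    A *ᵥ cramerKernelVec A g c = 0 := by
  rw [cramerKernelVec, mulVec_sub, mulVec_smul, mulVec_single_one, mulVec_extend_zero A hg,
    mulVec_cramer, sub_self]

theorem cramerKernelVec_apply_of_notMem_range (c : n) {j : n} (hj : j ∉ Set.range g) :
    cramerKernelVec A g c j = (Pi.single c (det (A.submatrix id g)) : n → R) j := by
  rw [cramerKernelVec, Pi.sub_apply, extend_apply' _ _ _ hj, Pi.smul_apply, Pi.single_apply,
    Pi.single_apply]
  split_ifs <;> simp

theorem cramerKernelVec_apply_apply (hg : Injective g) {c : n} (hc : c ∉ Set.range g) (k : m) :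
    cramerKernelVec A g c (g k) = -det (A.submatrix id (update g k c)) := by
  rw [cramerKernelVec, Pi.sub_apply, hg.extend_apply, cramer_apply, Pi.smul_apply,
    Pi.single_eq_of_ne (fun h => hc ⟨k, h⟩), smul_zero, zero_sub, submatrix_update_eq_updateCol]

theorem map_cramerKernelVec {S : Type*} [CommRing S] (f : R →+* S) (hg : Injective g) {c : n}
    (hc : c ∉ Set.range g) : f ∘ cramerKernelVec A g c = cramerKernelVec (A.map f) g c := by
  funext j
  by_cases hj : j ∈ Set.range g
  · obtain ⟨k, rfl⟩ := hj
    simp [cramerKernelVec_apply_apply hg hc, RingHom.map_det, submatrix_map]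
  · simp [cramerKernelVec_apply_of_notMem_range c hj, RingHom.map_det, submatrix_map,
      Pi.single_apply, apply_ite f]

end KernelVec

section Field

variable {K m n : Type*} [Field K] [Fintype m] [DecidableEq m] [DecidableEq n]
  {A : Matrix m n K} {g : m → n}

theorem linearIndependent_cramerKernelVec (hdet : det (A.submatrix id g) ≠ 0) :
    LinearIndependent K fun c : {c // c ∉ Set.range g} => cramerKernelVec A g c := by
  let restrict := LinearMap.funLeft K K (Subtype.val : {c // c ∉ Set.range g} → n)
  refine LinearIndependent.of_comp restrict ?_
  have hdiag : restrict ∘ (fun c : {c // c ∉ Set.range g} => cramerKernelVec A g c) =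
      fun c => Pi.single c (det (A.submatrix id g)) := by
    ext c c'
    simp [restrict, LinearMap.funLeft_apply, cramerKernelVec_apply_of_notMem_range _ c'.2,
      Pi.single_apply, Subtype.ext_iff]
  rw [hdiag]
  exact Pi.linearIndependent_single_of_ne_zero fun _ => hdet

theorem span_cramerKernelVec_eq_ker [Fintype n] (hdet : det (A.submatrix id g) ≠ 0)
    (hrank : A.rank = Fintype.card m) :
    Submodule.span K (Set.range fun c : {c // c ∉ Set.range g} => cramerKernelVec A g c) =
      LinearMap.ker A.mulVecLin := by
  have hg := injective_of_det_submatrix_ne_zero hdet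
  refine Submodule.eq_of_le_of_finrank_le ?_ ?_
  · rw [Submodule.span_le]
    rintro _ ⟨c, rfl⟩
    exact mulVec_cramerKernelVec hg c
  · have hker := LinearMap.finrank_range_add_finrank_ker A.mulVecLin
    rw [← Matrix.rank, hrank, finrank_fintype_fun_eq_card] at hker
    rw [finrank_span_eq_card (linearIndependent_cramerKernelVec hdet),
      Fintype.card_subtype_notMem_range hg]
    omega

end Field

theorem sq_cramerKernelVec_apply_le {S : Type*} [CommRing S] [LinearOrder S]
    [IsStrictOrderedRing S] {m n : ℕ} (A : Matrix (Fin m) (Fin n) S) {g : Fin m → Fin n}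
    (hg : Injective g) {c : Fin n} (hc : c ∉ Set.range g) (j : Fin n) :
    cramerKernelVec A g c j ^ 2 ≤ det (A * Aᵀ) := by
  by_cases hj : j ∈ Set.range g
  · obtain ⟨k, rfl⟩ := hj
    rw [cramerKernelVec_apply_apply hg hc, neg_sq]
    exact sq_det_submatrix_le_det_mul_transpose A _
  · rw [cramerKernelVec_apply_of_notMem_range c hj, Pi.single_apply]
    split_ifs
    · exact sq_det_submatrix_le_det_mul_transpose A g
    · exact (zero_pow two_ne_zero).trans_le
        ((sq_nonneg _).trans (sq_det_submatrix_le_det_mul_transpose A g))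

end Matrix

theorem siegel_lemma_general (M N : ℕ) (A : Matrix (Fin M) (Fin N) ℤ)
    (hrank : (A.map (Int.cast : ℤ → ℚ)).rank = M) :
    ∃ x : Fin (N - M) → (Fin N → ℚ),
      LinearIndependent ℚ x ∧
      Submodule.span ℚ (Set.range x) =
        LinearMap.ker (Matrix.mulVecLin (A.map (Int.cast : ℤ → ℚ))) ∧
      ∀ l j, ∃ z : ℤ, x l j = (z : ℚ) ∧
        (|z| : ℝ) ≤ Real.sqrt |(((A * A.transpose).det : ℤ) : ℝ)| := by
  set A' := A.map (Int.cast : ℤ → ℚ)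
  have hrank' : A'.rank = Fintype.card (Fin M) := by rwa [Fintype.card_fin]
  obtain ⟨g, hdet⟩ := A'.exists_det_submatrix_ne_zero_of_rank_eq hrank'
  have hg := injective_of_det_submatrix_ne_zero hdet
  let e : Fin (N - M) ≃ {c // c ∉ Set.range g} :=
    (Fintype.equivFinOfCardEq (by
      rw [Fintype.card_subtype_notMem_range hg, Fintype.card_fin, Fintype.card_fin])).symm
  refine ⟨(fun c : {c // c ∉ Set.range g} => cramerKernelVec A' g c) ∘ e,
    (linearIndependent_cramerKernelVec hdet).comp e e.injective, ?_,
    fun l j => ⟨cramerKernelVec A g (e l) j, ?_, ?_⟩⟩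
  · rw [EquivLike.range_comp]
    exact span_cramerKernelVec_eq_ker hdet hrank'
  · exact (congrFun (map_cramerKernelVec (Int.castRingHom ℚ) hg (e l).2) j).symm
  · exact Int.abs_cast_le_sqrt_abs_of_sq_le (sq_cramerKernelVec_apply_le A hg (e l).2 j)

/-- **Siegel's lemma.**  Let `A` be an `M × N` integer matrix (`M < N`) of rank `M`.
Then the space of rational solutions of `A x = 0` has a basis of `N − M` vectors whose
coordinates are integers bounded in absolute value by `√|det (A * Aᵀ)|`. -/
theorem siegel_lemma (M N : ℕ) (hM : 0 < M) (hMN : M < N)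
    (A : Matrix (Fin M) (Fin N) ℤ)
    (hrank : (A.map (Int.cast : ℤ → ℚ)).rank = M) :
    ∃ x : Fin (N - M) → (Fin N → ℚ),
      LinearIndependent ℚ x ∧
      Submodule.span ℚ (Set.range x) =
        LinearMap.ker (Matrix.mulVecLin (A.map (Int.cast : ℤ → ℚ))) ∧
      ∀ l j, ∃ z : ℤ, x l j = (z : ℚ) ∧
        (|z| : ℝ) ≤ Real.sqrt |(((A * A.transpose).det : ℤ) : ℝ)| :=
  siegel_lemma_general M N A hrank
end

section
/- Extracting small ℤ-bases (Lemma in §3.2): Let V be a vector space over ℚ endowed with a norm ‖·‖ and let V_ℤ be a free ℤ-submodule of V which spans V over ℚ. Given a basis {u_1, …, u_N} of V over ℚ lying in V_ℤ, there exists a subset {v_1, …, v_N} of V_ℤ with the property that for every i = 1, …, N, the set {v_1, …, v_i} is a ℤ-basis of (ℚ u_1 + ⋯ + ℚ u_i) ∩ V_ℤ and ‖v_i‖ ≤ Σ_{j=1}^{i} ‖u_j‖. -/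
/-! Write `W i = (ℚ u_0 + ⋯ + ℚ u_i) ∩ V_ℤ`; it is finitely generated, since a free ℤ-submodule of
a finite-dimensional ℚ-space has finite rank. The `i`-th coordinates of the elements of `W i`
form a finitely generated subgroup of `ℚ` containing `1`, hence a cyclic group `ℤ c_i` with
`|c_i| ≤ 1`. Take `w_i ∈ W i` with `i`-th coordinate `c_i` and subtract integer multiples of the
`u_j`, `j < i`, to replace its lower coordinates by their fractional parts. The resulting `v_i`
has all coordinates in `[-1, 1]`, which gives the norm bound; and since its leading coordinate
generates the leading coordinates of `W i`, induction on `i` shows that `v_0, …, v_i` span `W i`.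
-/

open Submodule

theorem Submodule.exists_eq_span_singleton_of_fg_rat {G : Submodule ℤ ℚ} (hG : G.FG) :
    ∃ c : ℚ, G = span ℤ {c} :=
  (FractionalIdeal.isPrincipal ⟨G, FractionalIdeal.isFractional_of_fg hG⟩).principal

theorem Submodule.fg_of_free_of_finiteDimensional (R K : Type*) {V : Type*} [CommRing R]
    [Field K] [Algebra R K] [IsFractionRing R K] [AddCommGroup V] [Module R V] [Module K V]
    [IsScalarTower R K V] [FiniteDimensional K V] (L : Submodule R V) [Module.Free R L] :
    L.FG := by
  let e := Module.Free.chooseBasis R L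
  have hR : LinearIndependent R (fun k => (e k : V)) :=
    e.linearIndependent.map' L.subtype L.ker_subtype
  have : Finite (Module.Free.ChooseBasisIndex R L) :=
    ((LinearIndependent.iff_fractionRing R K).1 hR).finite
  have : Module.Finite R L := Module.Finite.of_basis e
  exact Module.Finite.iff_fg.1 this

theorem Rat.norm_eq_cast_abs (q : ℚ) : ‖q‖ = ((|q| : ℚ) : ℝ) := by
  rw [Rat.cast_abs, ← Real.norm_eq_abs, Rat.norm_cast_real]

theorem Seminorm.le_sum_of_norm_repr_le_one {𝕜 ι V : Type*} [NormedField 𝕜] [AddCommGroup V]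
    [Module 𝕜 V] (p : Seminorm 𝕜 V) (b : Module.Basis ι 𝕜 V) {x : V} {s : Finset ι}
    (hx : ↑(b.repr x).support ⊆ (s : Set ι)) (hle : ∀ j ∈ s, ‖b.repr x j‖ ≤ 1) :
    p x ≤ ∑ j ∈ s, p (b j) := by
  have hsum : x = ∑ j ∈ s, b.repr x j • b j := by
    conv_lhs => rw [← b.linearCombination_repr x]
    exact Finsupp.linearCombination_apply_of_mem_supported 𝕜 hx
  calc p x = p (∑ j ∈ s, b.repr x j • b j) := congrArg p hsum
    _ ≤ ∑ j ∈ s, p (b.repr x j • b j) :=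
        Finset.le_sum_of_subadditive p (map_zero p).le (map_add_le_add p) _ _
    _ ≤ ∑ j ∈ s, p (b j) := Finset.sum_le_sum fun j hj => by
        rw [map_smul_eq_mul]
        exact mul_le_of_le_one_left (apply_nonneg _ _) (hle j hj)

namespace Module.Basis

variable {ι V : Type*} [AddCommGroup V] [Module ℚ V] (b : Basis ι ℚ V)

theorem exists_sub_mem_span_int_repr_eq_fract (x : V) (s : Finset ι) :
    ∃ y, x - y ∈ span ℤ (Set.range b) ∧ (∀ j ∈ s, b.repr y j = Int.fract (b.repr x j)) ∧
      ∀ j ∉ s, b.repr y j = b.repr x j := by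
  classical
  have hrepr : ∀ j, b.repr (x - ∑ j ∈ s, ⌊b.repr x j⌋ • b j) j =
      b.repr x j - if j ∈ s then (⌊b.repr x j⌋ : ℚ) else 0 := fun j => by
    simp only [map_sub, map_sum, map_zsmul, repr_self, Finsupp.sub_apply, Finsupp.coe_finsetSum,
      Finset.sum_apply, Finsupp.smul_apply, Finsupp.single_apply, smul_ite, smul_zero,
      Finset.sum_ite_eq', zsmul_eq_mul, mul_one]
  refine ⟨x - ∑ j ∈ s, ⌊b.repr x j⌋ • b j, ?_, fun j hj => ?_, fun j hj => ?_⟩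
  · rw [sub_sub_cancel]
    exact sum_mem fun j _ => zsmul_mem (subset_span (Set.mem_range_self j)) _
  · rw [hrepr, if_pos hj, Int.fract]
  · rw [hrepr, if_neg hj, sub_zero]

variable [LinearOrder ι] (L : Submodule ℤ V)

def flagLattice (i : ι) : Submodule ℤ V :=
  (span ℚ (b '' Set.Iic i)).restrictScalars ℤ ⊓ L

variable {b L}

theorem mem_flagLattice {i : ι} {x : V} :
    x ∈ b.flagLattice L i ↔ ↑(b.repr x).support ⊆ Set.Iic i ∧ x ∈ L := by
  rw [flagLattice, mem_inf, restrictScalars_mem, mem_span_image]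

theorem flagLattice_mono {i j : ι} (hij : i ≤ j) : b.flagLattice L i ≤ b.flagLattice L j :=
  inf_le_inf_right _ (span_mono (Set.image_mono (Set.Iic_subset_Iic.2 hij)))

theorem self_mem_flagLattice {i : ι} (hbi : b i ∈ L) : b i ∈ b.flagLattice L i :=
  mem_inf.2 ⟨b.self_mem_span_image.2 le_rfl, hbi⟩

theorem eq_zero_or_exists_lt_mem_flagLattice {i : ι} {y : V} (hy : y ∈ b.flagLattice L i)
    (hyi : b.repr y i = 0) : y = 0 ∨ ∃ j < i, y ∈ b.flagLattice L j := by
  rw [mem_flagLattice] at hy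
  rcases (b.repr y).support.eq_empty_or_nonempty with hempty | hne
  · exact .inl (b.repr.map_eq_zero_iff.1 (Finsupp.support_eq_empty.1 hempty))
  · have hmax := Finset.max'_mem _ hne
    refine .inr ⟨_, lt_of_le_of_ne (hy.1 hmax) fun h => Finsupp.mem_support_iff.1 hmax (h ▸ hyi),
      mem_flagLattice.2 ⟨fun j hj => Finset.le_max' _ j hj, hy.2⟩⟩

theorem span_image_Iic_eq_flagLattice [WellFoundedLT ι] {v : ι → V}
    (hv : ∀ i, v i ∈ b.flagLattice L i)
    (hgen : ∀ i, ∀ x ∈ b.flagLattice L i, ∃ k : ℤ, b.repr x i = k * b.repr (v i) i) (i : ι) :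
    span ℤ (v '' Set.Iic i) = b.flagLattice L i := by
  refine le_antisymm (span_le.2 ?_) ?_
  · rintro _ ⟨j, hj, rfl⟩
    exact flagLattice_mono hj (hv j)
  induction i using WellFoundedLT.induction with
  | _ i ih =>
    intro x hx
    obtain ⟨k, hk⟩ := hgen i x hx
    have hvi : v i ∈ span ℤ (v '' Set.Iic i) := subset_span ⟨i, le_rfl, rfl⟩
    suffices hy : x - k • v i ∈ span ℤ (v '' Set.Iic i) by
      simpa using add_mem hy (zsmul_mem hvi k)
    have hyi : b.repr (x - k • v i) i = 0 := by simp [hk]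
    obtain hy0 | ⟨j, hji, hyj⟩ :=
      eq_zero_or_exists_lt_mem_flagLattice (sub_mem hx (zsmul_mem (hv i) k)) hyi
    · rw [hy0]
      exact zero_mem _
    · exact span_mono (Set.image_mono (Set.Iic_subset_Iic.2 hji.le)) (ih j hji hyj)

theorem exists_mem_flagLattice_generating_coord (hL : L.FG) {i : ι} (hbi : b i ∈ L) :
    ∃ w ∈ b.flagLattice L i, |b.repr w i| ≤ 1 ∧
      ∀ x ∈ b.flagLattice L i, ∃ k : ℤ, b.repr x i = k * b.repr w i := by
  let G := (b.flagLattice L i).map ((b.coord i).restrictScalars ℤ)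
  obtain ⟨c, hc⟩ : ∃ c, G = span ℤ {c} :=
    exists_eq_span_singleton_of_fg_rat ((hL.of_le inf_le_right).map _)
  obtain ⟨w, hw, hwc⟩ := mem_map.1 (hc ▸ mem_span_singleton_self c : c ∈ G)
  have hgen : ∀ x ∈ b.flagLattice L i, ∃ k : ℤ, b.repr x i = k * c := fun x hx => by
    have hxG : b.repr x i ∈ G := mem_map_of_mem hx
    rw [hc, mem_span_singleton] at hxG
    obtain ⟨k, hk⟩ := hxG
    exact ⟨k, by rw [← hk, zsmul_eq_mul]⟩
  obtain ⟨k, hk⟩ := hgen (b i) (self_mem_flagLattice hbi)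
  rw [repr_self, Finsupp.single_eq_same] at hk
  have hk0 : k ≠ 0 := by
    rintro rfl
    simp at hk
  refine ⟨w, hw, ?_, hwc ▸ hgen⟩
  calc |b.repr w i| = |c| := congrArg abs hwc
    _ ≤ |(k : ℚ)| * |c| :=
        le_mul_of_one_le_left (abs_nonneg c) (by exact_mod_cast Int.one_le_abs hk0)
    _ = 1 := by rw [← abs_mul, ← hk, abs_one]

theorem exists_small_mem_flagLattice_generating_coord [Fintype ι] (hL : L.FG) (hbL : ∀ j, b j ∈ L)
    (i : ι) : ∃ v ∈ b.flagLattice L i, (∀ j, |b.repr v j| ≤ 1) ∧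
      ∀ x ∈ b.flagLattice L i, ∃ k : ℤ, b.repr x i = k * b.repr v i := by
  obtain ⟨w, hw, hwi, hgen⟩ := exists_mem_flagLattice_generating_coord hL (hbL i)
  obtain ⟨v, hwv, hlt, hge⟩ :=
    b.exists_sub_mem_span_int_repr_eq_fract w (Finset.univ.filter (· < i))
  have hvi : b.repr v i = b.repr w i := hge i (by simp)
  have hvw : ∀ j, i < j → b.repr v j = b.repr w j := fun j hij => hge j (by simp [hij.le])
  rw [mem_flagLattice] at hw
  have hvL : v ∈ L := by
    have hspan : span ℤ (Set.range b) ≤ L := span_le.2 (Set.range_subset_iff.2 hbL)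
    simpa using sub_mem hw.2 (hspan hwv)
  refine ⟨v, mem_flagLattice.2 ⟨fun j hj => ?_, hvL⟩, fun j => ?_, hvi ▸ hgen⟩
  · by_contra hij
    exact hij <| hw.1 <| Finsupp.mem_support_iff.2 <|
      hvw j (not_le.1 hij) ▸ Finsupp.mem_support_iff.1 hj
  rcases lt_trichotomy j i with hji | rfl | hij
  · rw [hlt j (by simpa using hji), abs_of_nonneg (Int.fract_nonneg _)]
    exact (Int.fract_lt_one _).le
  · rwa [hvi]
  · rw [hvw j hij, Finsupp.notMem_support_iff.1 fun hw' => hij.not_ge (hw.1 hw'), abs_zero]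
    exact zero_le_one

theorem linearIndependent_of_span_image_Iic_eq_flagLattice [Fintype ι] (hbL : ∀ i, b i ∈ L)
    {v : ι → V} (hv : ∀ i, span ℤ (v '' Set.Iic i) = b.flagLattice L i) :
    LinearIndependent ℤ v := by
  have hbv : ∀ i, b i ∈ span ℚ (Set.range v) := fun i =>
    span_le_restrictScalars ℤ ℚ _ <| span_mono (Set.image_subset_range _ _) <|
      (hv i).ge (self_mem_flagLattice (hbL i))
  have htop : ⊤ ≤ span ℚ (Set.range v) := b.span_eq ▸ span_le.2 (Set.range_subset_iff.2 hbv)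
  exact (linearIndependent_of_top_le_span_of_card_eq_finrank htop
    (finrank_eq_card_basis b).symm).restrict_scalars' ℤ

end Module.Basis

open Module.Basis in
theorem extracting_small_int_bases_general
    (V : Type*) [AddCommGroup V] [Module ℚ V] (nrm : V → ℝ)
    (h_add : ∀ x y : V, nrm (x + y) ≤ nrm x + nrm y)
    (h_smul : ∀ (q : ℚ) (x : V), nrm (q • x) = |q| * nrm x)
    (VZ : Submodule ℤ V) (hfree : Module.Free ℤ VZ)
    (n : ℕ) (u : Fin n → V)
    (hu_indep : LinearIndependent ℚ u)
    (hu_span : Submodule.span ℚ (Set.range u) = ⊤)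
    (huZ : ∀ i, u i ∈ VZ) :
    ∃ v : Fin n → V,
      (∀ i, v i ∈ VZ) ∧
      LinearIndependent ℤ v ∧
      (∀ i : Fin n,
        Submodule.span ℤ (v '' {j | j ≤ i}) =
          (Submodule.span ℚ (u '' {j | j ≤ i})).restrictScalars ℤ ⊓ VZ) ∧
      ∀ i : Fin n, nrm (v i) ≤ ∑ j ∈ Finset.Iic i, nrm (u j) := by
  obtain ⟨b, rfl⟩ : ∃ b : Module.Basis (Fin n) ℚ V, ⇑b = u :=
    ⟨.mk hu_indep hu_span.ge, Module.Basis.coe_mk _ _⟩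
  have : FiniteDimensional ℚ V := .of_basis b
  have hVZ : VZ.FG := VZ.fg_of_free_of_finiteDimensional ℤ ℚ
  choose v hvW hv_le_one hgen using exists_small_mem_flagLattice_generating_coord hVZ huZ
  have hspan := span_image_Iic_eq_flagLattice hvW hgen
  let p : Seminorm ℚ V := .of nrm h_add fun q x => by
    rw [h_smul, Rat.norm_eq_cast_abs]
  refine ⟨v, fun i => (mem_flagLattice.1 (hvW i)).2,
    linearIndependent_of_span_image_Iic_eq_flagLattice huZ hspan, hspan, fun i => ?_⟩
  exact p.le_sum_of_norm_repr_le_one b (by simpa using (mem_flagLattice.1 (hvW i)).1)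
    fun j _ => (Rat.norm_eq_cast_abs _).trans_le (by exact_mod_cast hv_le_one i j)

/-- **Extracting small ℤ-bases.**  Let `V` be a ℚ-vector space with a norm `nrm`, and let
`VZ` be a free ℤ-submodule of `V` spanning `V` over ℚ.  Given a ℚ-basis `u 0, …, u (n-1)`
of `V` contained in `VZ`, there is a family `v 0, …, v (n-1)` of elements of `VZ` such that
for every `i` the family `{v j : j ≤ i}` is a ℤ-basis of `(ℚ u 0 + ⋯ + ℚ u i) ∩ VZ`, and
`‖v i‖ ≤ Σ_{j ≤ i} ‖u j‖`. -/
theorem extracting_small_int_bases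
    (V : Type*) [AddCommGroup V] [Module ℚ V] (nrm : V → ℝ)
    (h_add : ∀ x y : V, nrm (x + y) ≤ nrm x + nrm y)
    (h_smul : ∀ (q : ℚ) (x : V), nrm (q • x) = |q| * nrm x)
    (h_eq_zero : ∀ x : V, nrm x = 0 → x = 0)
    (VZ : Submodule ℤ V) (hfree : Module.Free ℤ VZ)
    (hspan : Submodule.span ℚ (VZ : Set V) = ⊤)
    (n : ℕ) (u : Fin n → V)
    (hu_indep : LinearIndependent ℚ u)
    (hu_span : Submodule.span ℚ (Set.range u) = ⊤)
    (huZ : ∀ i, u i ∈ VZ) :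
    ∃ v : Fin n → V,
      (∀ i, v i ∈ VZ) ∧
      LinearIndependent ℤ v ∧
      (∀ i : Fin n,
        Submodule.span ℤ (v '' {j | j ≤ i}) =
          (Submodule.span ℚ (u '' {j | j ≤ i})).restrictScalars ℤ ⊓ VZ) ∧
      ∀ i : Fin n, nrm (v i) ≤ ∑ j ∈ Finset.Iic i, nrm (u j) :=
  extracting_small_int_bases_general V nrm h_add h_smul VZ hfree n u hu_indep hu_span huZ
end

section
/- Claim in Step 3 of the proof of Proposition 3.1: Let 𝔤 be a finite-dimensional Lie algebra over ℚ with solvable radical 𝔯 = R(𝔤), and let f : 𝔤 → 𝔯/[𝔯,𝔯] be a ℚ-linear map such that (i) the restriction of f to 𝔯 equals the canonical projection 𝔯 → 𝔯/[𝔯,𝔯], and (ii) f([u,v]) = u·f(v) − v·f(u) for all u, v ∈ 𝔤, where · denotes the action of 𝔤 on the module 𝔯/[𝔯,𝔯]. Then ker f is a Lie subalgebra of 𝔤 whose solvable radical equals [𝔯,𝔯]. -/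
/-!
The cocycle identity makes `K = ker f` a subalgebra, and the two conditions on `f` give
`K ∩ 𝔯 = [𝔯,𝔯]` and `K + 𝔯 = 𝔤`. Hence `K` maps onto `𝔤/𝔯`, which has trivial radical, so
the radical of `K` maps to a solvable ideal there and vanishes, i.e. `R(K) ⊆ K ∩ 𝔯 = [𝔯,𝔯]`.
Conversely `[𝔯,𝔯]` is a solvable ideal of `𝔤` lying in `K`, hence a solvable ideal of `K`.
-/

/-- The derived ideal `⁅𝔯, 𝔯⁆` of the solvable radical `𝔯` of a Lie algebra. -/
noncomputable def derivedRadical (L : Type*) [LieRing L] [LieAlgebra ℚ L] : LieIdeal ℚ L :=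
  ⁅LieAlgebra.radical ℚ L, LieAlgebra.radical ℚ L⁆

open LieAlgebra

namespace LieIdeal

variable {R L L' : Type*} [CommRing R] [LieRing L] [LieAlgebra R L] [LieRing L'] [LieAlgebra R L']

def mkQ (I : LieIdeal R L) : L →ₗ⁅R⁆ L ⧸ I :=
  { (I : Submodule R L).mkQ with map_lie' := rfl }

@[simp]
lemma mkQ_apply (I : LieIdeal R L) (x : L) : I.mkQ x = LieSubmodule.Quotient.mk x := rfl

lemma mkQ_surjective (I : LieIdeal R L) : Function.Surjective I.mkQ :=
  Submodule.mkQ_surjective _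

@[simp]
lemma ker_mkQ (I : LieIdeal R L) : I.mkQ.ker = I := by
  ext x
  simp [LieHom.mem_ker]

lemma map_derivedSeriesOfIdeal {f : L →ₗ⁅R⁆ L'} (hf : Function.Surjective f)
    (I : LieIdeal R L) (k : ℕ) :
    map f (derivedSeriesOfIdeal R L k I) = derivedSeriesOfIdeal R L' k (map f I) := by
  induction k with
  | zero => simp
  | succ k ih => rw [derivedSeriesOfIdeal_succ, derivedSeriesOfIdeal_succ, map_bracket_eq _ hf, ih]

lemma isSolvable_map {f : L →ₗ⁅R⁆ L'} (hf : Function.Surjective f) (I : LieIdeal R L)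
    [IsSolvable I] : IsSolvable (map f I) := by
  obtain ⟨k, hk⟩ := IsSolvable.solvable R I
  rw [derivedSeries_eq_bot_iff] at hk
  refine IsSolvable.mk (R := R) (k := k) ?_
  rw [derivedSeries_eq_bot_iff, ← map_derivedSeriesOfIdeal hf, hk]
  exact map_eq_bot_iff.mpr bot_le

lemma isSolvable_comap {f : L →ₗ⁅R⁆ L'} (hf : Function.Injective f) (J : LieIdeal R L')
    [IsSolvable J] : IsSolvable (comap f J) :=
  let g : comap f J →ₗ⁅R⁆ J :=
    { toFun := fun x => ⟨f x, x.2⟩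
      map_add' x y := Subtype.ext (map_add f (x : L) y)
      map_smul' t x := Subtype.ext (map_smul f t (x : L))
      map_lie' := Subtype.ext (f.map_lie _ _) }
  Function.Injective.lieAlgebra_isSolvable (f := g)
    fun _ _ h => Subtype.ext (hf (congrArg Subtype.val h))

lemma isSolvable_of_derivedSeriesOfIdeal_le {I J : LieIdeal R L} [IsSolvable J] {k : ℕ}
    (h : derivedSeriesOfIdeal R L k I ≤ J) : IsSolvable I := by
  obtain ⟨l, hl⟩ := IsSolvable.solvable R J
  rw [derivedSeries_eq_bot_iff] at hl
  refine IsSolvable.mk (R := R) (k := l + k) ?_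
  rw [derivedSeries_eq_bot_iff, derivedSeriesOfIdeal_add, eq_bot_iff, ← hl]
  exact derivedSeriesOfIdeal_mono h l

end LieIdeal

namespace LieAlgebra

variable {R L : Type*} [CommRing R] [LieRing L] [LieAlgebra R L]

-- An ideal of `L ⧸ 𝔯` with `k`-th derived ideal zero pulls back to an ideal whose `k`-th
-- derived ideal lies in `𝔯`; being an extension of solvable algebras, it is contained in `𝔯`.
instance hasTrivialRadical_quotient_radical [IsNoetherian R L] :
    HasTrivialRadical R (L ⧸ radical R L) := by
  refine hasTrivialRadical_of_no_solvable_ideals fun J hJ => ?_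
  set π := (radical R L).mkQ
  obtain ⟨k, hk⟩ := IsSolvable.solvable R J
  rw [LieIdeal.derivedSeries_eq_bot_iff] at hk
  have hD : derivedSeriesOfIdeal R L k (J.comap π) ≤ π.ker := by
    rw [← LieIdeal.map_eq_bot_iff, eq_bot_iff, ← hk,
      LieIdeal.map_derivedSeriesOfIdeal (radical R L).mkQ_surjective]
    exact derivedSeriesOfIdeal_mono LieIdeal.map_comap_le k
  rw [LieIdeal.ker_mkQ] at hD
  have : IsSolvable (J.comap π) := LieIdeal.isSolvable_of_derivedSeriesOfIdeal_le hD
  have hN : J.comap π ≤ radical R L := le_sSup this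
  refine eq_bot_iff.mpr fun y hy => ?_
  obtain ⟨x, rfl⟩ := (radical R L).mkQ_surjective y
  simpa using hN (LieIdeal.mem_comap.mpr hy)

end LieAlgebra

namespace LieSubalgebra

variable {R L : Type*} [CommRing R] [LieRing L] [LieAlgebra R L]

lemma comap_incl_le_radical (K : LieSubalgebra R L) (I : LieIdeal R L) [IsSolvable I] :
    I.comap K.incl ≤ radical R K :=
  le_sSup (LieIdeal.isSolvable_comap Subtype.val_injective I)

lemma radical_le_comap_radical_of_sup_eq_top [IsNoetherian R L] (K : LieSubalgebra R L)
    (hK : K.toSubmodule ⊔ (radical R L).toSubmodule = ⊤) :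
    radical R K ≤ (radical R L).comap K.incl := by
  have : IsNoetherian R K := inferInstanceAs (IsNoetherian R K.toSubmodule)
  set φ := (radical R L).mkQ.comp K.incl
  have hφ : Function.Surjective φ := by
    intro y
    obtain ⟨x, rfl⟩ := (radical R L).mkQ_surjective y
    obtain ⟨a, ha, b, hb, rfl⟩ := Submodule.mem_sup.mp (hK ▸ Submodule.mem_top : x ∈ _)
    exact ⟨⟨a, ha⟩, by simpa [φ] using hb⟩
  have : IsSolvable ((radical R K).map φ) := LieIdeal.isSolvable_map hφ _
  intro x hx
  simpa [φ, LieHom.mem_ker] using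
    LieIdeal.map_eq_bot_iff.mp (HasTrivialRadical.eq_bot_of_isSolvable ((radical R K).map φ)) hx

theorem map_radical_eq_of_inf_eq_of_sup_eq_top [IsNoetherian R L] (K : LieSubalgebra R L)
    (I : LieIdeal R L) (hinf : K.toSubmodule ⊓ (radical R L).toSubmodule = I.toSubmodule)
    (hsup : K.toSubmodule ⊔ (radical R L).toSubmodule = ⊤) :
    (radical R K).toSubmodule.map K.incl.toLinearMap = I.toSubmodule := by
  have hI : I ≤ radical R L :=
    (LieSubmodule.toSubmodule_le_toSubmodule _ _).mp (hinf ▸ inf_le_right)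
  have : IsSolvable I := le_solvable_ideal_solvable hI inferInstance
  refine le_antisymm ?_ fun x hx => ?_
  · rintro _ ⟨x, hx, rfl⟩
    exact hinf ▸ ⟨x.2, K.radical_le_comap_radical_of_sup_eq_top hsup hx⟩
  · have hxK : x ∈ K := (hinf ▸ hx : x ∈ K.toSubmodule ⊓ _).1
    exact ⟨⟨x, hxK⟩, K.comap_incl_le_radical I hx, rfl⟩

end LieSubalgebra

section Cocycle

variable {R L M : Type*} [CommRing R] [LieRing L] [LieAlgebra R L]
  [AddCommGroup M] [Module R M] [LieRingModule L M]

def LieSubalgebra.cocycleKer (f : L →ₗ[R] M) (hf : ∀ u v : L, f ⁅u, v⁆ = ⁅u, f v⁆ - ⁅v, f u⁆) :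
    LieSubalgebra R L :=
  { LinearMap.ker f with
    lie_mem' := fun {u v} (hu : f u = 0) (hv : f v = 0) => by
      simp [LinearMap.mem_ker, hf, hu, hv] }

@[simp]
lemma LieSubalgebra.mem_cocycleKer {f : L →ₗ[R] M}
    {hf : ∀ u v : L, f ⁅u, v⁆ = ⁅u, f v⁆ - ⁅v, f u⁆} {x : L} :
    x ∈ LieSubalgebra.cocycleKer f hf ↔ f x = 0 :=
  Iff.rfl

end Cocycle

/-- **Claim in Step 3 of the proof of Proposition 3.1.**  Let `𝔤 = L` be a
finite-dimensional Lie algebra over ℚ with solvable radical `𝔯`, and let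
`f : 𝔤 → 𝔯/[𝔯,𝔯]` be a ℚ-linear map (realized as a linear map into `𝔤/[𝔯,𝔯]` whose range
lies in the image of `𝔯`) which restricts to the canonical projection on `𝔯` and satisfies
`f ⁅u, v⁆ = u • f v − v • f u` for the adjoint action on the quotient module.  Then
`ker f` is a Lie subalgebra of `𝔤` whose solvable radical equals `[𝔯,𝔯]`. -/
theorem ker_is_subalgebra_with_radical_derived
    (L : Type*) [LieRing L] [LieAlgebra ℚ L] [Module.Finite ℚ L]
    (f : L →ₗ[ℚ] (L ⧸ derivedRadical L))
    (hrange : ∀ u : L, ∃ r ∈ LieAlgebra.radical ℚ L,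
      f u = LieSubmodule.Quotient.mk' (derivedRadical L) r)
    (hproj : ∀ r ∈ LieAlgebra.radical ℚ L,
      f r = LieSubmodule.Quotient.mk' (derivedRadical L) r)
    (hcocycle : ∀ u v : L, f ⁅u, v⁆ = ⁅u, f v⁆ - ⁅v, f u⁆) :
    ∃ K : LieSubalgebra ℚ L,
      K.toSubmodule = LinearMap.ker f ∧
      Submodule.map K.incl.toLinearMap
          (LieSubmodule.toSubmodule (LieAlgebra.radical ℚ K)) =
        LieSubmodule.toSubmodule (derivedRadical L) := by
  set K := LieSubalgebra.cocycleKer f hcocycle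
  have hD : derivedRadical L ≤ radical ℚ L := LieSubmodule.lie_le_left _ _
  have hker : ∀ r ∈ radical ℚ L, f r = 0 ↔ r ∈ derivedRadical L := fun r hr => by
    rw [hproj r hr, LieSubmodule.Quotient.mk_eq_zero]
  have hinf : K.toSubmodule ⊓ (radical ℚ L).toSubmodule = (derivedRadical L).toSubmodule := by
    ext x
    exact ⟨fun ⟨hxK, hxr⟩ => (hker x hxr).mp hxK, fun hx => ⟨(hker x (hD hx)).mpr hx, hD hx⟩⟩
  have hsup : K.toSubmodule ⊔ (radical ℚ L).toSubmodule = ⊤ := by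
    refine eq_top_iff.mpr fun u _ => ?_
    obtain ⟨r, hr, hfu⟩ := hrange u
    have hur : u - r ∈ K :=
      LieSubalgebra.mem_cocycleKer.mpr (by rw [map_sub, hfu, hproj r hr, sub_self])
    exact Submodule.mem_sup.mpr ⟨u - r, hur, r, hr, sub_add_cancel u r⟩
  exact ⟨K, rfl, K.map_radical_eq_of_inf_eq_of_sup_eq_top _ hinf hsup⟩
end

section
/- Levi subalgebras of ker f are Levi subalgebras of 𝔤 (equation (levi-kerf) in the proof of Proposition 3.1): Let 𝔤 be a finite-dimensional Lie algebra over ℚ with solvable radical 𝔯, and let f : 𝔤 → 𝔯/[𝔯,𝔯] be a ℚ-linear map restricting to the canonical projection on 𝔯 and satisfying f([u,v]) = u·f(v) − v·f(u) for all u, v ∈ 𝔤. If 𝔥 is a Lie subalgebra of ker f with 𝔥 ∩ [𝔯,𝔯] = {0} and 𝔥 + [𝔯,𝔯] = ker f (i.e. 𝔥 is a complement in ker f of the radical [𝔯,𝔯] of ker f), then 𝔥 ∩ 𝔯 = {0} and 𝔥 + 𝔯 = 𝔤, i.e. 𝔤 = 𝔯 ⊕ 𝔥 is a Levi decomposition of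 𝔤. -/
namespace LinearMap

theorem ker_inf_le_ker_of_eqOn {R M N : Type*} [Semiring R] [AddCommMonoid M]
    [AddCommMonoid N] [Module R M] [Module R N] {f g : M →ₗ[R] N} {p : Submodule R M}
    (hfg : ∀ x ∈ p, f x = g x) : ker f ⊓ p ≤ ker g := by
  rintro x ⟨hfx, hx⟩
  rw [mem_ker, ← hfg x hx]
  exact hfx

theorem ker_sup_eq_top_of_eqOn {R M N : Type*} [Ring R] [AddCommGroup M] [AddCommGroup N]
    [Module R M] [Module R N] {f g : M →ₗ[R] N} {p : Submodule R M}
    (hfg : ∀ x ∈ p, f x = g x) (hrange : ∀ u : M, ∃ r ∈ p, f u = g r) :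
    ker f ⊔ p = ⊤ := by
  refine eq_top_iff.2 fun u _ => ?_
  obtain ⟨r, hr, hfu⟩ := hrange u
  have hker : u - r ∈ ker f := by rw [mem_ker, map_sub, hfu, hfg r hr, sub_self]
  simpa using Submodule.add_mem_sup hker hr

end LinearMap

theorem levi_of_ker_is_levi_general
    (L : Type*) [LieRing L] [LieAlgebra ℚ L]
    (f : L →ₗ[ℚ] (L ⧸ derivedRadical L))
    (hrange : ∀ u : L, ∃ r ∈ LieAlgebra.radical ℚ L,
      f u = LieSubmodule.Quotient.mk' (derivedRadical L) r)
    (hproj : ∀ r ∈ LieAlgebra.radical ℚ L,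
      f r = LieSubmodule.Quotient.mk' (derivedRadical L) r)
    (H : LieSubalgebra ℚ L)
    (hH_inf : H.toSubmodule ⊓ LieSubmodule.toSubmodule (derivedRadical L) = ⊥)
    (hH_sup : H.toSubmodule ⊔ LieSubmodule.toSubmodule (derivedRadical L) =
      LinearMap.ker f) :
    H.toSubmodule ⊓ LieSubmodule.toSubmodule (LieAlgebra.radical ℚ L) = ⊥ ∧
      H.toSubmodule ⊔ LieSubmodule.toSubmodule (LieAlgebra.radical ℚ L) = ⊤ := by
  set D := (derivedRadical L).toSubmodule
  set 𝔯 := (LieAlgebra.radical ℚ L).toSubmodule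
  let π : L →ₗ[ℚ] L ⧸ derivedRadical L := LieSubmodule.Quotient.mk' (derivedRadical L)
  have hker_π : LinearMap.ker π = D :=
    congrArg LieSubmodule.toSubmodule (LieSubmodule.Quotient.mk'_ker _)
  have hD_le : D ≤ 𝔯 := LieSubmodule.lie_le_left _ _
  have hH_le : H.toSubmodule ≤ LinearMap.ker f := hH_sup ▸ le_sup_left
  constructor
  · refine eq_bot_iff.2 (hH_inf ▸ ?_)
    calc H.toSubmodule ⊓ 𝔯 ≤ H.toSubmodule ⊓ (LinearMap.ker f ⊓ 𝔯) :=
          le_inf inf_le_left (inf_le_inf_right _ hH_le)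
      _ ≤ H.toSubmodule ⊓ D :=
          inf_le_inf_left _ (hker_π ▸ LinearMap.ker_inf_le_ker_of_eqOn hproj)
  · have hker_sup : LinearMap.ker f ⊔ 𝔯 = ⊤ :=
      LinearMap.ker_sup_eq_top_of_eqOn (g := π) hproj hrange
    rw [← top_le_iff, ← hker_sup, ← hH_sup, sup_assoc, sup_eq_right.2 hD_le]

/-- **Levi subalgebras of `ker f` are Levi subalgebras of `𝔤`** (equation (levi-kerf) in
the proof of Proposition 3.1).  Let `𝔤 = L` be a finite-dimensional Lie algebra over ℚ with
solvable radical `𝔯`, and let `f : 𝔤 → 𝔯/[𝔯,𝔯]` be a ℚ-linear map (realized as a map into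
`𝔤/[𝔯,𝔯]` with range inside the image of `𝔯`) restricting to the canonical projection on
`𝔯` and satisfying the cocycle identity.  If `𝔥` is a Lie subalgebra of `ker f` with
`𝔥 ∩ [𝔯,𝔯] = 0` and `𝔥 + [𝔯,𝔯] = ker f`, then `𝔥 ∩ 𝔯 = 0` and `𝔥 + 𝔯 = 𝔤`, i.e.
`𝔤 = 𝔯 ⊕ 𝔥` is a Levi decomposition of `𝔤`. -/
theorem levi_of_ker_is_levi
    (L : Type*) [LieRing L] [LieAlgebra ℚ L] [Module.Finite ℚ L]
    (f : L →ₗ[ℚ] (L ⧸ derivedRadical L))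
    (hrange : ∀ u : L, ∃ r ∈ LieAlgebra.radical ℚ L,
      f u = LieSubmodule.Quotient.mk' (derivedRadical L) r)
    (hproj : ∀ r ∈ LieAlgebra.radical ℚ L,
      f r = LieSubmodule.Quotient.mk' (derivedRadical L) r)
    (hcocycle : ∀ u v : L, f ⁅u, v⁆ = ⁅u, f v⁆ - ⁅v, f u⁆)
    (H : LieSubalgebra ℚ L)
    (hH_le : H.toSubmodule ≤ LinearMap.ker f)
    (hH_inf : H.toSubmodule ⊓ LieSubmodule.toSubmodule (derivedRadical L) = ⊥)
    (hH_sup : H.toSubmodule ⊔ LieSubmodule.toSubmodule (derivedRadical L) =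
      LinearMap.ker f) :
    H.toSubmodule ⊓ LieSubmodule.toSubmodule (LieAlgebra.radical ℚ L) = ⊥ ∧
      H.toSubmodule ⊔ LieSubmodule.toSubmodule (LieAlgebra.radical ℚ L) = ⊤ :=
  levi_of_ker_is_levi_general L f hrange hproj H hH_inf hH_sup
end

section
/- Bound on conjugated unipotent matrices (used in the proofs of Lemmas 2.1 and 4.2): Let N ≥ 1, let a = diag(a_1, …, a_N) be a diagonal real N × N matrix with positive entries satisfying a_i / a_{i+1} ≤ 2/√3 for all i = 1, …, N−1, and let u = (u_{ij}) be an upper-triangular unipotent real N × N matrix with |u_{ij}| ≤ 1/2 for all i < j. Then the operator norm of a u a^{-1} with respect to the max norm on ℝ^N satisfies ‖a u a^{-1}‖_op ≤ (1/2)·(((2/√3)^N − 1)/((2/√3) − 1) + 1). -/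
/-!
Entry `(i, j)` of `a u a⁻¹` is `(a i / a j) * u i j`, and chaining the consecutive ratio bounds
gives `a i / a j ≤ r ^ (j - i)` for `i ≤ j`, with `r = 2/√3`. So row `i` has diagonal entry `1`
and entries at most `r ^ (j - i) / 2` to the right of it, and its absolute sum is at most
`1 + (r + ⋯ + r ^ (N - 1)) / 2`, which is the claimed geometric-sum bound.
-/

open Finset

section

variable {N : ℕ}

theorem div_le_pow_sub_of_div_succ_le {a : Fin N → ℝ} (hpos : ∀ i, 0 < a i) {r : ℝ}
    (hratio : ∀ (i : Fin N) (h : (i : ℕ) + 1 < N), a i / a ⟨(i : ℕ) + 1, h⟩ ≤ r)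
    {i j : Fin N} (hij : i ≤ j) : a i / a j ≤ r ^ ((j : ℕ) - i) := by
  obtain ⟨j, hj⟩ := j
  induction j, (show (i : ℕ) ≤ j from hij) using Nat.le_induction with
  | base => simp [div_self (hpos i).ne']
  | succ m him ih =>
    have hm : m < N := by omega
    have ih := ih hm (Fin.mk_le_mk.2 him)
    have hnonneg := (div_pos (hpos i) (hpos ⟨m, hm⟩)).le
    calc a i / a ⟨m + 1, hj⟩ = a i / a ⟨m, hm⟩ * (a ⟨m, hm⟩ / a ⟨m + 1, hj⟩) :=
          (div_mul_div_cancel₀ (hpos _).ne').symm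
      _ ≤ r ^ (m - i) * r :=
          mul_le_mul ih (hratio ⟨m, hm⟩ hj) (div_pos (hpos _) (hpos _)).le (hnonneg.trans ih)
      _ = r ^ (m + 1 - i) := by rw [← pow_succ, Nat.sub_add_comm him]

theorem sum_Ioi_pow_sub_le_sum_Ico {r : ℝ} (hr : 0 ≤ r) (i : Fin N) :
    ∑ j ∈ Ioi i, r ^ ((j : ℕ) - i) ≤ ∑ k ∈ Ico 1 N, r ^ k := by
  rw [← sum_image (g := fun j : Fin N => (j : ℕ) - i) (f := (r ^ ·)) fun j hj k hk hjk => by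
    simp only [coe_Ioi, Set.mem_Ioi] at hj hk
    exact Fin.ext (by simp only at hjk; omega)]
  refine sum_le_sum_of_subset_of_nonneg ?_ fun k _ _ => pow_nonneg hr k
  intro k hk
  simp only [mem_image, mem_Ioi] at hk
  obtain ⟨j, hij, rfl⟩ := hk
  simp only [mem_Ico]
  omega

variable {a : Fin N → ℝ} {u : Matrix (Fin N) (Fin N) ℝ}

theorem diagonal_mul_mul_diagonal_inv_apply (i j : Fin N) :
    (Matrix.diagonal a * u * Matrix.diagonal fun k => (a k)⁻¹) i j = a i * u i j / a j := by
  simp [Matrix.mul_diagonal, Matrix.diagonal_mul, div_eq_mul_inv]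

theorem abs_diagonal_mul_mul_diagonal_inv_apply_le (hpos : ∀ i, 0 < a i) {r c : ℝ}
    (hratio : ∀ (i : Fin N) (h : (i : ℕ) + 1 < N), a i / a ⟨(i : ℕ) + 1, h⟩ ≤ r)
    (hupper : ∀ i j : Fin N, i < j → |u i j| ≤ c) {i j : Fin N} (hij : i < j) :
    |(Matrix.diagonal a * u * Matrix.diagonal fun k => (a k)⁻¹) i j| ≤ c * r ^ ((j : ℕ) - i) := by
  have hratio_ij := div_le_pow_sub_of_div_succ_le hpos hratio hij.le
  rw [diagonal_mul_mul_diagonal_inv_apply, mul_div_right_comm, abs_mul,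
    abs_of_pos (div_pos (hpos i) (hpos j)), mul_comm]
  exact mul_le_mul (hupper i j hij) hratio_ij (div_pos (hpos i) (hpos j)).le
    ((abs_nonneg _).trans (hupper i j hij))

theorem sum_abs_diagonal_mul_mul_diagonal_inv_apply_le (hpos : ∀ i, 0 < a i) {r c : ℝ}
    (hratio : ∀ (i : Fin N) (h : (i : ℕ) + 1 < N), a i / a ⟨(i : ℕ) + 1, h⟩ ≤ r)
    (hdiag : ∀ i, u i i = 1) (hlower : ∀ i j : Fin N, j < i → u i j = 0)
    (hupper : ∀ i j : Fin N, i < j → |u i j| ≤ c) (i : Fin N) :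
    ∑ j, |(Matrix.diagonal a * u * Matrix.diagonal fun k => (a k)⁻¹) i j| ≤
      1 + c * ∑ j ∈ Ioi i, r ^ ((j : ℕ) - i) := by
  have hentry (j : Fin N) :
      |(Matrix.diagonal a * u * Matrix.diagonal fun k => (a k)⁻¹) i j| ≤
        (if j = i then 1 else 0) + if i < j then c * r ^ ((j : ℕ) - i) else 0 := by
    rcases lt_trichotomy j i with hji | rfl | hij
    · simp [hlower i j hji, hji.ne, hji.not_gt]
    · simp [hdiag, (hpos j).ne']
    · simpa [hij.ne', hij] using abs_diagonal_mul_mul_diagonal_inv_apply_le hpos hratio hupper hij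
  calc _ ≤ ∑ j, ((if j = i then 1 else 0) + if i < j then c * r ^ ((j : ℕ) - i) else 0) :=
        sum_le_sum fun j _ => hentry j
    _ = 1 + c * ∑ j ∈ Ioi i, r ^ ((j : ℕ) - i) := by
        rw [sum_add_distrib, sum_ite_eq', ← sum_filter, filter_lt_eq_Ioi, mul_sum]
        simp

end

theorem one_lt_two_div_sqrt_three : 1 < 2 / √3 := by
  rw [one_lt_div (by positivity), Real.sqrt_lt' two_pos]
  norm_num

theorem opNorm_conj_unipotent_le_general
    (N : ℕ) (a : Fin N → ℝ) (hpos : ∀ i, 0 < a i)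
    (hratio : ∀ (i : Fin N) (h : (i : ℕ) + 1 < N), a i / a ⟨(i : ℕ) + 1, h⟩ ≤ 2 / Real.sqrt 3)
    (u : Matrix (Fin N) (Fin N) ℝ)
    (hdiag : ∀ i, u i i = 1)
    (hlower : ∀ i j : Fin N, j < i → u i j = 0)
    (hupper : ∀ i j : Fin N, i < j → |u i j| ≤ 1 / 2) :
    ∀ i : Fin N,
      ∑ j : Fin N,
          |(Matrix.diagonal a * u * Matrix.diagonal fun k => (a k)⁻¹) i j| ≤
        (1 / 2) * (((2 / Real.sqrt 3) ^ N - 1) / ((2 / Real.sqrt 3) - 1) + 1) := by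
  intro i
  have hr := one_lt_two_div_sqrt_three
  calc _ ≤ 1 + 1 / 2 * ∑ j ∈ Ioi i, (2 / √3) ^ ((j : ℕ) - i) :=
        sum_abs_diagonal_mul_mul_diagonal_inv_apply_le hpos hratio hdiag hlower hupper i
    _ ≤ 1 + 1 / 2 * ∑ k ∈ Ico 1 N, (2 / √3) ^ k := by
        gcongr
        exact sum_Ioi_pow_sub_le_sum_Ico (by positivity) i
    _ = _ := by
        rw [sum_Ico_eq_sub _ i.pos, geom_sum_eq hr.ne', sum_range_one, pow_zero]
        ring

/-- **Bound on conjugated unipotent matrices.**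
Let `a = diag (a 0, …, a (N-1))` be a diagonal real matrix with positive entries whose
consecutive ratios satisfy `a i / a (i+1) ≤ 2/√3`, and let `u` be upper-triangular unipotent
with off-diagonal entries bounded by `1/2`.  Then the operator norm of `a * u * a⁻¹` with
respect to the max norm on `ℝ^N` (i.e. the maximum over rows of the sum of the absolute
values of the entries of that row) is at most
`(1/2) * (((2/√3)^N − 1)/((2/√3) − 1) + 1)`. -/
theorem opNorm_conj_unipotent_le
    (N : ℕ) (hN : 1 ≤ N) (a : Fin N → ℝ) (hpos : ∀ i, 0 < a i)
    (hratio : ∀ (i : Fin N) (h : (i : ℕ) + 1 < N), a i / a ⟨(i : ℕ) + 1, h⟩ ≤ 2 / Real.sqrt 3)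
    (u : Matrix (Fin N) (Fin N) ℝ)
    (hdiag : ∀ i, u i i = 1)
    (hlower : ∀ i j : Fin N, j < i → u i j = 0)
    (hupper : ∀ i j : Fin N, i < j → |u i j| ≤ 1 / 2) :
    ∀ i : Fin N,
      ∑ j : Fin N,
          |(Matrix.diagonal a * u * Matrix.diagonal fun k => (a k)⁻¹) i j| ≤
        (1 / 2) * (((2 / Real.sqrt 3) ^ N - 1) / ((2 / Real.sqrt 3) - 1) + 1) :=
  opNorm_conj_unipotent_le_general N a hpos hratio u hdiag hlower hupper
end
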